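/- Suppose the presentation ⟨X|R⟩ is extra-confluent. Let w1 be a word over X, let w2 be a word of length N−1, and let x1, x2 ∈ X be such that: (1) w1x1 and x1w2 are normal forms for ⟨X|R⟩, and (2) w2x2 is not a normal form for ⟨X|R⟩. Then the word w1x1w2 is a normal form for ⟨X|R⟩. -/

import Mathlib

open scoped TensorProduct
set_option linter.unusedSectionVars false

def altProd {A : Type*} [Monoid A] (t s : A) (k : ℕ) : A :=
  if Even k then (t * s) ^ (k / 2) else s * (t * s) ^ (k / 2)

namespace CC

variable (K : Type*) [Field K] (X : Type*) [Fintype X] [LinearOrder X]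

abbrev F : Type _ := MonoidAlgebra K (FreeMonoid X)

noncomputable def wd (w : FreeMonoid X) : F K X := MonoidAlgebra.of K (FreeMonoid X) w

def wlen (w : FreeMonoid X) : ℕ := (FreeMonoid.toList w).length

noncomputable instance : LinearOrder (FreeMonoid X) :=
  LinearOrder.lift' (fun w => FreeMonoid.toList w) (fun _ _ h => FreeMonoid.toList.injective h)

noncomputable def lm (f : F K X) : FreeMonoid X := WithBot.unbotD 1 (f.coeff.support.max)

/-- The homogeneous component `V^{⊗m} = KX^{(m)}` of `K⟨X⟩`:
elements supported on words of length `m`. -/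
noncomputable def degSub (m : ℕ) : Submodule K (F K X) where
  carrier := {f | ∀ w ∈ f.coeff.support, wlen X w = m}
  add_mem' := by
    intro a b ha hb w hw
    rcases Finset.mem_union.mp (Finsupp.support_add hw) with h | h
    · exact ha w h
    · exact hb w h
  zero_mem' := by intro w hw; simp at hw
  smul_mem' := by intro c f hf w hw; exact hf w (Finsupp.support_smul hw)

lemma mem_degSub {m : ℕ} {f : F K X} :
    f ∈ degSub K X m ↔ ∀ w ∈ f.coeff.support, wlen X w = m := Iff.rfl

/-- `l_N(2k) = kN`, `l_N(2k+1) = kN + 1`. -/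
def lN (N n : ℕ) : ℕ := if Even n then (n / 2) * N else (n / 2) * N + 1

/-- The homogeneous component `I(R)_m` of the two-sided ideal generated by `R`:
`I(R)_m = Σ_{i=0}^{m−N} V^{⊗i}·R̄·V^{⊗m−N−i}` for `m ≥ N` and `I(R)_m = 0` for `m < N`. -/
noncomputable def idealPiece (N : ℕ) (R : Set (F K X)) (m : ℕ) : Submodule K (F K X) :=
  if m < N then ⊥
  else ⨆ i ∈ Finset.range (m - N + 1),
    degSub K X i * Submodule.span K R * degSub K X (m - N - i)

/-- The two-sided ideal `I(R)` of `K⟨X⟩` generated by `R`, as a `K`-subspace. -/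
noncomputable def idealSpan (R : Set (F K X)) : Submodule K (F K X) :=
  Submodule.span K {x | ∃ u v : FreeMonoid X, ∃ g ∈ R, x = wd K X u * g * wd K X v}

/-- `J_0 = K`, `J_1 = V`, and `J_n = ⋂_{i=0}^{l_N(n)−N} V^{⊗i}·R̄·V^{⊗l_N(n)−N−i}` for `n ≥ 2`. -/
noncomputable def Jspace (N : ℕ) (R : Set (F K X)) : ℕ → Submodule K (F K X)
  | 0 => degSub K X 0
  | 1 => degSub K X 1
  | (n + 2) => ⨅ i ∈ Finset.range (lN N (n + 2) - N + 1),
      degSub K X i * Submodule.span K R * degSub K X (lN N (n + 2) - N - i)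

open Classical in
/-- The reduction `r_{u·g·v}` of the presentation `⟨X|R⟩`: the linear endomorphism of `K⟨X⟩`
fixing every word other than `u·lm(g)·v` and sending `u·lm(g)·v` to `u·(lm(g)−g)·v`. -/
noncomputable def redMap (u : FreeMonoid X) (g : F K X) (v : FreeMonoid X) :
    F K X →ₗ[K] F K X :=
  Finsupp.linearCombination K (fun w : FreeMonoid X =>
    if w = u * lm K X g * v then wd K X u * (wd K X (lm K X g) - g) * wd K X v
    else wd K X w) ∘ₗ (MonoidAlgebra.coeffLinearEquiv K).toLinearMap

/-- `f` is a normal form for `⟨X|R⟩` if it is fixed by every reduction. -/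
def IsNormalForm (R : Set (F K X)) (f : F K X) : Prop :=
  ∀ u v : FreeMonoid X, ∀ g ∈ R, redMap K X u g v f = f

/-- `g` is a normal form of `f`: `g` is a normal form and is obtained from `f` by applying a
finite sequence of reductions of `⟨X|R⟩`. -/
def NormalFormOf (R : Set (F K X)) (f g : F K X) : Prop :=
  IsNormalForm K X R g ∧
    ∃ L : List (FreeMonoid X × F K X × FreeMonoid X),
      (∀ p ∈ L, p.2.1 ∈ R) ∧
      g = L.foldr (fun p h => redMap K X p.1 p.2.1 p.2.2 h) f

/-- The presentation `⟨X|R⟩` is reduced: for every `f ∈ R`, `lm(f) − f` is a normal form for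
`⟨X|R⟩` and `lm(f)` is a normal form for `⟨X | R∖{f}⟩`. -/
def Reduced (R : Set (F K X)) : Prop :=
  ∀ f ∈ R, IsNormalForm K X R (wd K X (lm K X f) - f) ∧
    IsNormalForm K X (R \ {f}) (wd K X (lm K X f))

/-- `R` consists of `N`-homogeneous elements with leading coefficient `1`. -/
def NHomogLC1 (N : ℕ) (R : Set (F K X)) : Prop :=
  ∀ f ∈ R, f ∈ degSub K X N ∧ f.coeff (lm K X f) = 1

open Classical in
/-- The operator `S` of the presentation `⟨X|R⟩`: the endomorphism of `V^{⊗N}` sending `lm(f)`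
to `lm(f) − f` for every `f ∈ R` and fixing all other words (extended by the identity on words
of other lengths). -/
noncomputable def Sop (R : Set (F K X)) : F K X →ₗ[K] F K X :=
  Finsupp.linearCombination K (fun w : FreeMonoid X =>
    if h : ∃ f ∈ R, lm K X f = w then wd K X w - h.choose else wd K X w) ∘ₗ (MonoidAlgebra.coeffLinearEquiv K).toLinearMap

/-- `S ⊗ id_{V^{⊗b}}` realized on `K⟨X⟩`: on a word of length `a + b`, apply `S` to the first
`a` letters and the identity to the last `b` letters; the identity on all other words. -/
noncomputable def applyLeft (S : F K X →ₗ[K] F K X) (a b : ℕ) : F K X →ₗ[K] F K X :=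
  Finsupp.linearCombination K (fun w : FreeMonoid X =>
    if wlen X w = a + b then
      S (wd K X (FreeMonoid.ofList ((FreeMonoid.toList w).take a))) *
        wd K X (FreeMonoid.ofList ((FreeMonoid.toList w).drop a))
    else wd K X w) ∘ₗ (MonoidAlgebra.coeffLinearEquiv K).toLinearMap

/-- `id_{V^{⊗a}} ⊗ S` realized on `K⟨X⟩`: on a word of length `a + b`, apply the identity to
the first `a` letters and `S` to the last `b` letters; the identity on all other words. -/
noncomputable def applyRight (S : F K X →ₗ[K] F K X) (a b : ℕ) : F K X →ₗ[K] F K X :=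
  Finsupp.linearCombination K (fun w : FreeMonoid X =>
    if wlen X w = a + b then
      wd K X (FreeMonoid.ofList ((FreeMonoid.toList w).take a)) *
        S (wd K X (FreeMonoid.ofList ((FreeMonoid.toList w).drop a)))
    else wd K X w) ∘ₗ (MonoidAlgebra.coeffLinearEquiv K).toLinearMap

/-- The presentation `⟨X|R⟩` is side-confluent: for every `1 ≤ m ≤ N−1` there exists `k ≥ 1`
with `⟨id_{V^{⊗m}}⊗S, S⊗id_{V^{⊗m}}⟩^k = ⟨S⊗id_{V^{⊗m}}, id_{V^{⊗m}}⊗S⟩^k` on `V^{⊗N+m}`. -/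
def SideConfluent (N : ℕ) (R : Set (F K X)) : Prop :=
  ∀ m : ℕ, 1 ≤ m → m ≤ N - 1 →
    ∃ k : ℕ, 1 ≤ k ∧
      ∀ f ∈ degSub K X (N + m),
        altProd (applyRight K X (Sop K X R) m N) (applyLeft K X (Sop K X R) N m) k f =
          altProd (applyLeft K X (Sop K X R) N m) (applyRight K X (Sop K X R) m N) k f

/-- The extra-condition: `(V^{⊗n}⊗R̄) ∩ (R̄⊗V^{⊗n}) ⊆ V^{⊗n−1}⊗R̄⊗V` for every `2 ≤ n ≤ N−1`. -/
def ExtraCondition (N : ℕ) (R : Set (F K X)) : Prop :=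
  ∀ n : ℕ, 2 ≤ n → n ≤ N - 1 →
    (degSub K X n * Submodule.span K R) ⊓ (Submodule.span K R * degSub K X n) ≤
      degSub K X (n - 1) * Submodule.span K R * degSub K X 1

/-- A reduction operator relative to `X^{(m)}`, realized as a linear endomorphism of `K⟨X⟩`
extended by the identity outside of `V^{⊗m}`: an idempotent operator fixing each word of
length `m` or mapping it to an element of `V^{⊗m}` all of whose monomials are strictly
smaller. -/
structure IsRedOp (m : ℕ) (T : F K X →ₗ[K] F K X) : Prop where
  idem : T ∘ₗ T = T
  le : ∀ w : FreeMonoid X, wlen X w = m →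
    T (wd K X w) = wd K X w ∨
      (T (wd K X w) ∈ degSub K X m ∧ ∀ u ∈ (T (wd K X w)).coeff.support, u < w)
  other : ∀ w : FreeMonoid X, wlen X w ≠ m → T (wd K X w) = wd K X w

/-- The kernel `I(R)_{m−l_N(n)} ⊗ V^{⊗l_N(n)}` of the reduction operator `F_1^{n,m}`. -/
noncomputable def ker1 (N : ℕ) (R : Set (F K X)) (n m : ℕ) : Submodule K (F K X) :=
  idealPiece K X N R (m - lN N n) * degSub K X (lN N n)

/-- The kernel of the reduction operator `F_2^{n,m}`: `⊥` if `m < l_N(n+1)` (so that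
`F_2^{n,m} = id`), and `V^{⊗m−l_N(n+1)} ⊗ J_{n+1}` otherwise. -/
noncomputable def ker2 (N : ℕ) (R : Set (F K X)) (n m : ℕ) : Submodule K (F K X) :=
  if m < lN N (n + 1) then ⊥
  else degSub K X (m - lN N (n + 1)) * Jspace K X N R (n + 1)

/-- The span of the normal words of length `d`, i.e. `φ(V^{⊗d})` where `φ` is the
normal-form map. -/
noncomputable def nfSub (R : Set (F K X)) (d : ℕ) : Submodule K (F K X) :=
  Submodule.span K
    {x | ∃ w : FreeMonoid X, wlen X w = d ∧ IsNormalForm K X R (wd K X w) ∧ x = wd K X w}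

/-- `Γ = (id − T2)·Σ_{i odd, 1 ≤ i ≤ k−1} ⟨T2,T1⟩^i`, the image of the element `γ1` of the
confluence algebra under the `(T1,T2)`-representation. -/
noncomputable def Gamma (T1 T2 : F K X →ₗ[K] F K X) (k : ℕ) : F K X →ₗ[K] F K X :=
  (1 - T2) * ∑ i ∈ (Finset.Icc 1 (k - 1)).filter (fun i => Odd i), altProd T2 T1 i

end CC

/-!
Suppose `w₁x₁w₂ = u·lm(f)·v` with `f ∈ R`. As `w₁x₁` and `x₁w₂` are normal forms, this occurrence
of `lm(f)` starts inside `w₁` and ends strictly inside `w₂`: `lm(f) = s x₁ p` and `w₂ = p v` with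
`1 ≤ |s| = |v| ≤ N - 2`. Moreover `w₂x₂ = lm(g)` for some `g ∈ R`, by length. Put `m = |s| + 1`
and `W = s x₁ w₂ x₂ = lm(f)·v x₂ = s x₁·lm(g)`. Then `f·v x₂ ∈ R̄V^{⊗m}` and `s x₁·g ∈ V^{⊗m}R̄`
both have leading word `W`. Side-confluence makes the leading word of every nonzero element of
`R̄V^{⊗m} + V^{⊗m}R̄` reducible at its beginning or at its end, and cancelling leading words this way
produces `c ∈ R̄V^{⊗m} ∩ V^{⊗m}R̄` with leading word `W`. By the extra-condition
`c ∈ V^{⊗m-1}R̄V`, so `id ⊗ S ⊗ id` kills `c`. Being triangular, this operator therefore cannot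
fix `W`: the factor of `W` at position `m - 1`, which is `x₁w₂`, is reducible.
-/

namespace CC

variable {K : Type*} [Field K] {X : Type*} [Fintype X] [LinearOrder X] {N m : ℕ}
  {R : Set (F K X)}

open MonoidAlgebra

section Words

lemma wlen_mul (u v : FreeMonoid X) : wlen X (u * v) = wlen X u + wlen X v := by
  simp [wlen]

lemma wlen_of (x : X) : wlen X (FreeMonoid.of x) = 1 := rfl

lemma wlen_eq_zero {w : FreeMonoid X} : wlen X w = 0 ↔ w = 1 := by
  rw [wlen, List.length_eq_zero_iff, ← FreeMonoid.toList_one, FreeMonoid.toList.injective.eq_iff]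

lemma exists_eq_mul_of_wlen_eq_add {w : FreeMonoid X} {a b : ℕ} (h : wlen X w = a + b) :
    ∃ u v, w = u * v ∧ wlen X u = a ∧ wlen X v = b := by
  refine ⟨.ofList (w.toList.take a), .ofList (w.toList.drop a), ?_, ?_, ?_⟩
  · apply FreeMonoid.toList.injective
    simp
  · simp only [wlen, FreeMonoid.toList_ofList, List.length_take] at h ⊢; omega
  · simp only [wlen, FreeMonoid.toList_ofList, List.length_drop] at h ⊢; omega

lemma eq_and_eq_of_mul_eq_mul {u u' v v' : FreeMonoid X} (h : u * v = u' * v')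
    (hl : wlen X u = wlen X u') : u = u' ∧ v = v' := by
  have := List.append_inj (congrArg FreeMonoid.toList h) hl
  exact ⟨FreeMonoid.toList.injective this.1, FreeMonoid.toList.injective this.2⟩

lemma mul_lt_mul_left_word {u v : FreeMonoid X} (h : u < v) (t : FreeMonoid X) :
    t * u < t * v :=
  List.Lex.append_left _ h t.toList

lemma mul_le_mul_left_word {u v : FreeMonoid X} (h : u ≤ v) (t : FreeMonoid X) :
    t * u ≤ t * v := by
  rcases h.lt_or_eq with h | rfl
  · exact (mul_lt_mul_left_word h t).le
  · rfl

lemma mul_lt_mul_right_word {u v : FreeMonoid X} (hl : wlen X u = wlen X v) (h : u < v)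
    (t : FreeMonoid X) : u * t < v * t := by
  change List.Lex (· < ·) (u.toList ++ t.toList) (v.toList ++ t.toList)
  change List.Lex (· < ·) u.toList v.toList at h
  change u.toList.length = v.toList.length at hl
  generalize u.toList = a, v.toList = b at h hl ⊢
  induction h with
  | nil => simp at hl
  | rel h => exact .rel h
  | cons _ ih => exact .cons (ih (by simpa using hl))

lemma mul_le_mul_right_word {u v : FreeMonoid X} (hl : wlen X u = wlen X v) (h : u ≤ v)
    (t : FreeMonoid X) : u * t ≤ v * t := by
  rcases h.lt_or_eq with h | rfl
  · exact (mul_lt_mul_right_word hl h t).le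
  · rfl

lemma finite_setOf_wlen_eq (n : ℕ) : {w : FreeMonoid X | wlen X w = n}.Finite :=
  (List.finite_length_eq X n).preimage FreeMonoid.toList.injective.injOn

end Words

section Coefficients

lemma wd_eq_single (u : FreeMonoid X) : wd K X u = single u 1 := rfl

lemma wd_mul_wd (u v : FreeMonoid X) : wd K X u * wd K X v = wd K X (u * v) :=
  (map_mul _ u v).symm

lemma coeff_wd_self (w : FreeMonoid X) : (wd K X w).coeff w = 1 := by
  simp [wd_eq_single]

lemma coeff_mul_wd (p : F K X) (t w : FreeMonoid X) :
    (p * wd K X t).coeff (w * t) = p.coeff w := by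
  simp [wd_eq_single]

lemma coeff_wd_mul (p : F K X) (t w : FreeMonoid X) :
    (wd K X t * p).coeff (t * w) = p.coeff w := by
  simp [wd_eq_single]

lemma wd_mem_supported {u : FreeMonoid X} {s : Set (FreeMonoid X)} (hu : u ∈ s) :
    wd K X u ∈ supported K K s := by
  rw [wd_eq_single, supported_eq_span_single]
  exact Submodule.subset_span ⟨u, hu, rfl⟩

lemma degSub_eq_span (m : ℕ) :
    degSub K X m = Submodule.span K (wd K X '' {w | wlen X w = m}) :=
  supported_eq_span_single _ _

lemma linear_ext_wd {M : Type*} [AddCommGroup M] [Module K M] {T T' : F K X →ₗ[K] M}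
    (h : ∀ w, T (wd K X w) = T' (wd K X w)) : T = T' := by
  ext w
  exact h w

lemma linearCombination_coeff_wd (φ : FreeMonoid X → F K X) (w : FreeMonoid X) :
    (Finsupp.linearCombination K φ ∘ₗ (coeffLinearEquiv K).toLinearMap) (wd K X w) = φ w := by
  simp [wd_eq_single]

end Coefficients

section LeadingMonomial

lemma lm_eq_max' {p : F K X} (hp : p.coeff.support.Nonempty) :
    lm K X p = p.coeff.support.max' hp := by
  rw [lm, ← Finset.coe_max' hp]
  rfl

lemma lm_mem_support {p : F K X} (hp : p ≠ 0) : lm K X p ∈ p.coeff.support := by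
  have hne : p.coeff.support.Nonempty := by simpa using hp
  rw [lm_eq_max' hne]
  exact Finset.max'_mem _ _

lemma le_lm {p : F K X} {w : FreeMonoid X} (hw : w ∈ p.coeff.support) : w ≤ lm K X p := by
  rw [lm_eq_max' ⟨w, hw⟩]
  exact Finset.le_max' _ _ hw

lemma mem_supported_Iic_lm (p : F K X) : p ∈ supported K K (Set.Iic (lm K X p)) :=
  fun _ hw => le_lm hw

lemma lm_lt_of_mem_supported_Iio {p : F K X} {M : FreeMonoid X} (hp : p ≠ 0)
    (h : p ∈ supported K K (Set.Iio M)) : lm K X p < M :=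
  h (lm_mem_support hp)

lemma sub_smul_wd_mem_supported_Iio {p : F K X} {M : FreeMonoid X}
    (hp : p ∈ supported K K (Set.Iic M)) :
    p - p.coeff M • wd K X M ∈ supported K K (Set.Iio M) := by
  classical
  rw [mem_supported']
  intro w hw
  rw [Set.mem_Iio, not_lt] at hw
  rcases hw.eq_or_lt with rfl | hlt
  · simp [wd_eq_single]
  · have hw : w ∉ Set.Iic M := not_le.mpr hlt
    simp [wd_eq_single, (mem_supported'.mp hp) w hw, hlt.ne]

end LeadingMonomial

section Triangular

lemma apply_mem_supported_of_isLowerSet {T : F K X →ₗ[K] F K X}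
    (hT : ∀ w, T (wd K X w) ∈ supported K K (Set.Iic w)) {s : Set (FreeMonoid X)}
    (hs : IsLowerSet s) {p : F K X} (hp : p ∈ supported K K s) : T p ∈ supported K K s := by
  rw [supported_eq_span_single] at hp
  induction hp using Submodule.span_induction with
  | mem _ h =>
      obtain ⟨w, hw, rfl⟩ := h
      exact supported_mono (fun u hu => hs hu hw) (hT w)
  | zero => simp
  | add _ _ _ _ h h' => simpa using add_mem h h'
  | smul c _ _ h => simpa using Submodule.smul_mem _ c h

def triangular : Submonoid (Module.End K (F K X)) where
  carrier := {T | ∀ w, T (wd K X w) ∈ supported K K (Set.Iic w)}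
  one_mem' _ := wd_mem_supported (Set.mem_Iic.mpr le_rfl)
  mul_mem' hT hT' w := apply_mem_supported_of_isLowerSet hT (isLowerSet_Iic w) (hT' w)

lemma coeff_apply_of_mem_triangular {T : Module.End K (F K X)} (hT : T ∈ triangular)
    {M : FreeMonoid X} (hM : T (wd K X M) = wd K X M) {p : F K X}
    (hp : p ∈ supported K K (Set.Iic M)) : (T p).coeff M = p.coeff M := by
  have hlow := apply_mem_supported_of_isLowerSet (fun w => hT w) (isLowerSet_Iio M)
    (sub_smul_wd_mem_supported_Iio hp)
  have hM0 : (T (p - p.coeff M • wd K X M)).coeff M = 0 :=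
    mem_supported'.mp hlow M (lt_irrefl M)
  rw [map_sub, map_smul, hM] at hM0
  simpa [wd_eq_single, sub_eq_zero] using hM0

end Triangular

section AltProd

variable {A : Type*} [Monoid A]

lemma altProd_mem (S : Submonoid A) {t s : A} (ht : t ∈ S) (hs : s ∈ S) (k : ℕ) :
    altProd t s k ∈ S := by
  unfold altProd
  split_ifs
  · exact pow_mem (mul_mem ht hs) _
  · exact mul_mem hs (pow_mem (mul_mem ht hs) _)

lemma exists_altProd_eq_mul (t s : A) {k : ℕ} (hk : 1 ≤ k) : ∃ a, altProd t s k = a * s := by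
  unfold altProd
  split_ifs with he
  · obtain ⟨j, hj⟩ := he
    obtain ⟨i, rfl⟩ : ∃ i, j = i + 1 := ⟨j - 1, by omega⟩
    refine ⟨(t * s) ^ i * t, ?_⟩
    rw [show k / 2 = i + 1 by omega, pow_succ]
    simp only [mul_assoc]
  · rcases k / 2 with _ | i
    · exact ⟨1, by simp⟩
    · exact ⟨s * (t * s) ^ i * t, by rw [pow_succ]; simp only [mul_assoc]⟩

lemma altProd_apply_eq_zero {M : Type*} [AddCommGroup M] [Module K M] (t s : Module.End K M)
    {k : ℕ} (hk : 1 ≤ k) {x : M} (hx : s x = 0) : altProd t s k x = 0 := by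
  obtain ⟨a, ha⟩ := exists_altProd_eq_mul t s hk
  rw [ha, Module.End.mul_apply, hx, map_zero]

end AltProd

section Reductions

lemma redMap_apply (u : FreeMonoid X) (g : F K X) (v : FreeMonoid X) (p : F K X) :
    redMap K X u g v p = p - p.coeff (u * lm K X g * v) • (wd K X u * g * wd K X v) := by
  classical
  suffices redMap K X u g v = LinearMap.id - LinearMap.smulRight
      (Finsupp.lapply (u * lm K X g * v) ∘ₗ (coeffLinearEquiv K).toLinearMap)
      (wd K X u * g * wd K X v) by
    rw [this]; rfl
  refine linear_ext_wd fun w => ?_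
  rw [redMap, linearCombination_coeff_wd]
  split_ifs with h
  · subst h
    simp [mul_sub, sub_mul, wd_mul_wd, coeff_wd_self]
  · simp [wd_eq_single, Ne.symm h]

lemma coeff_wd_mul_mul_wd (u : FreeMonoid X) (g : F K X) (v : FreeMonoid X) :
    (wd K X u * g * wd K X v).coeff (u * lm K X g * v) = g.coeff (lm K X g) := by
  rw [coeff_mul_wd, coeff_wd_mul]

lemma isNormalForm_iff (hR : 0 ∉ R) {p : F K X} :
    IsNormalForm K X R p ↔ ∀ g ∈ R, ∀ u v, p.coeff (u * lm K X g * v) = 0 := by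
  have hne : ∀ g ∈ R, ∀ u v, wd K X u * g * wd K X v ≠ 0 := fun g hg u v h => by
    have := coeff_wd_mul_mul_wd (K := K) u g v
    rw [h] at this
    exact (Finsupp.mem_support_iff.mp (lm_mem_support (ne_of_mem_of_not_mem hg hR))) this.symm
  simp only [IsNormalForm, redMap_apply, sub_eq_self, smul_eq_zero]
  constructor
  · exact fun h g hg u v => (h u v g hg).resolve_right (hne g hg u v)
  · exact fun h u v g hg => Or.inl (h g hg u v)

lemma isNormalForm_wd_iff (hR : 0 ∉ R) {w : FreeMonoid X} :
    IsNormalForm K X R (wd K X w) ↔ ∀ g ∈ R, ∀ u v, w ≠ u * lm K X g * v := by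
  classical
  rw [isNormalForm_iff hR]
  simp [wd_eq_single, Finsupp.single_apply, eq_comm]

end Reductions

section Presentation

lemma NHomogLC1.zero_notMem (hhom : NHomogLC1 K X N R) : (0 : F K X) ∉ R := fun h => by
  simpa using (hhom 0 h).2

lemma NHomogLC1.wlen_lm (hhom : NHomogLC1 K X N R) {f : F K X} (hf : f ∈ R) :
    wlen X (lm K X f) = N :=
  (hhom f hf).1 _ (lm_mem_support (ne_of_mem_of_not_mem hf hhom.zero_notMem))

lemma NHomogLC1.span_le_degSub (hhom : NHomogLC1 K X N R) :
    Submodule.span K R ≤ degSub K X N :=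
  Submodule.span_le.mpr fun f hf => (hhom f hf).1

lemma NHomogLC1.exists_lm_eq_of_not_isNormalForm (hhom : NHomogLC1 K X N R)
    {w : FreeMonoid X} (hw : wlen X w = N) (h : ¬ IsNormalForm K X R (wd K X w)) :
    ∃ g ∈ R, lm K X g = w := by
  simp only [isNormalForm_wd_iff hhom.zero_notMem, not_forall, not_not] at h
  obtain ⟨g, hg, u, v, huv⟩ := h
  have hl := congrArg (wlen X) huv
  simp only [wlen_mul, hw, hhom.wlen_lm hg] at hl
  obtain rfl : u = 1 := wlen_eq_zero.mp (by omega)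
  obtain rfl : v = 1 := wlen_eq_zero.mp (by omega)
  exact ⟨g, hg, by simp [huv]⟩

lemma Reduced.lm_injOn (hred : Reduced K X R) (hhom : NHomogLC1 K X N R) :
    Set.InjOn (lm K X) R := by
  intro f hf g hg h
  by_contra hne
  have hR : (0 : F K X) ∉ R \ {f} := fun h0 => hhom.zero_notMem h0.1
  exact (isNormalForm_wd_iff hR).mp (hred f hf).2 g ⟨hg, Ne.symm hne⟩ 1 1 (by simp [h])

lemma Reduced.lm_ne_of_mem_support (hred : Reduced K X R) (hhom : NHomogLC1 K X N R)
    {f g : F K X} (hf : f ∈ R) (hg : g ∈ R) {w : FreeMonoid X} (hw : w ∈ f.coeff.support)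
    (hne : w ≠ lm K X f) : lm K X g ≠ w := by
  rintro rfl
  have := (isNormalForm_iff hhom.zero_notMem).mp (hred f hf).1 g hg 1 1
  simp [wd_eq_single, Ne.symm hne, Finsupp.mem_support_iff.mp hw] at this

end Presentation

section Sop

open Classical in
lemma Sop_wd (w : FreeMonoid X) : Sop K X R (wd K X w) =
    if h : ∃ f ∈ R, lm K X f = w then wd K X w - h.choose else wd K X w :=
  linearCombination_coeff_wd _ _

lemma Sop_wd_of_forall_ne {w : FreeMonoid X} (h : ∀ f ∈ R, lm K X f ≠ w) :
    Sop K X R (wd K X w) = wd K X w := by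
  classical
  rw [Sop_wd, dif_neg (by simpa using h)]

lemma Sop_wd_eq_or (w : FreeMonoid X) : Sop K X R (wd K X w) = wd K X w ∨
    ∃ f ∈ R, lm K X f = w ∧ Sop K X R (wd K X w) = wd K X w - f := by
  classical
  rw [Sop_wd]
  split_ifs with h
  · exact Or.inr ⟨_, h.choose_spec.1, h.choose_spec.2, rfl⟩
  · exact Or.inl rfl

lemma Sop_wd_lm (hhom : NHomogLC1 K X N R) (hred : Reduced K X R) {f : F K X} (hf : f ∈ R) :
    Sop K X R (wd K X (lm K X f)) = wd K X (lm K X f) - f := by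
  classical
  have h : ∃ g ∈ R, lm K X g = lm K X f := ⟨f, hf, rfl⟩
  rw [Sop_wd, dif_pos h, hred.lm_injOn hhom h.choose_spec.1 hf h.choose_spec.2]

lemma Sop_mem_triangular : Sop K X R ∈ triangular := by
  intro w
  obtain h | ⟨f, -, rfl, h⟩ := Sop_wd_eq_or (R := R) (K := K) w <;> rw [h]
  · exact wd_mem_supported (Set.mem_Iic.mpr le_rfl)
  · exact sub_mem (wd_mem_supported (Set.mem_Iic.mpr le_rfl)) (mem_supported_Iic_lm f)

lemma Sop_wd_mem_degSub (hhom : NHomogLC1 K X N R) {w : FreeMonoid X} (hw : wlen X w = N) :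
    Sop K X R (wd K X w) ∈ degSub K X N := by
  obtain h | ⟨f, hf, -, h⟩ := Sop_wd_eq_or (R := R) (K := K) w <;> rw [h]
  · exact wd_mem_supported hw
  · exact sub_mem (wd_mem_supported hw) (hhom f hf).1

lemma Sop_eq_self_of_mem_supported {s : Set (FreeMonoid X)} (hs : ∀ w ∈ s, ∀ f ∈ R, lm K X f ≠ w)
    {p : F K X} (hp : p ∈ supported K K s) : Sop K X R p = p := by
  rw [supported_eq_span_single] at hp
  refine LinearMap.eqOn_span' (g := LinearMap.id) ?_ hp
  rintro _ ⟨w, hw, rfl⟩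
  exact Sop_wd_of_forall_ne (hs w hw)

lemma Sop_eq_zero (hhom : NHomogLC1 K X N R) (hred : Reduced K X R) {f : F K X} (hf : f ∈ R) :
    Sop K X R f = 0 := by
  classical
  have htail : Sop K X R (f - wd K X (lm K X f)) = f - wd K X (lm K X f) := by
    refine Sop_eq_self_of_mem_supported (s := ↑(f.coeff.support.erase (lm K X f)))
      (fun w hw g hg => ?_) (mem_supported'.mpr fun w hw => ?_)
    · exact hred.lm_ne_of_mem_support hhom hf hg (Finset.mem_of_mem_erase hw)
        (Finset.ne_of_mem_erase hw)
    · rw [Finset.mem_coe, Finset.mem_erase, not_and_or, not_not,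
        Finsupp.mem_support_iff, not_not] at hw
      by_cases hwf : w = lm K X f
      · simp [hwf, coeff_wd_self, (hhom f hf).2]
      · simp [wd_eq_single, Ne.symm hwf, hw.resolve_left hwf]
  calc Sop K X R f = Sop K X R (wd K X (lm K X f)) + Sop K X R (f - wd K X (lm K X f)) := by
        rw [← map_add, add_sub_cancel]
    _ = 0 := by rw [Sop_wd_lm hhom hred hf, htail]; abel

lemma Sop_eq_zero_of_mem_span (hhom : NHomogLC1 K X N R) (hred : Reduced K X R) {p : F K X}
    (hp : p ∈ Submodule.span K R) : Sop K X R p = 0 :=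
  (Submodule.span_le (p := LinearMap.ker (Sop K X R)).mpr fun _ hf => Sop_eq_zero hhom hred hf) hp

end Sop

section Supported

lemma degSub_mul_le (a b : ℕ) : degSub K X a * degSub K X b ≤ degSub K X (a + b) := by
  rw [degSub_eq_span, degSub_eq_span, Submodule.span_mul_span, Submodule.span_le]
  rintro _ ⟨_, ⟨u, hu, rfl⟩, _, ⟨v, hv, rfl⟩, rfl⟩
  change wd K X u * wd K X v ∈ degSub K X (a + b)
  rw [wd_mul_wd]
  exact wd_mem_supported (show wlen X (u * v) = a + b by rw [wlen_mul, hu, hv])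

lemma mul_wd_mem_supported_Iic {p : F K X} {u : FreeMonoid X}
    (hp : p ∈ supported K K (Set.Iic u)) (hp' : p ∈ degSub K X (wlen X u)) (v : FreeMonoid X) :
    p * wd K X v ∈ supported K K (Set.Iic (u * v)) := by
  refine mem_supported.mpr fun w hw => ?_
  rw [Finset.mem_coe, wd_eq_single, support_coeff_mul_single p 1 (by simp) v] at hw
  obtain ⟨x, hx, rfl⟩ := Finset.mem_map.mp hw
  exact mul_le_mul_right_word (hp' x hx) (hp hx) v

lemma mul_wd_mem_supported_Iio {p : F K X} {u : FreeMonoid X}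
    (hp : p ∈ supported K K (Set.Iio u)) (hp' : p ∈ degSub K X (wlen X u)) (v : FreeMonoid X) :
    p * wd K X v ∈ supported K K (Set.Iio (u * v)) := by
  refine mem_supported.mpr fun w hw => ?_
  rw [Finset.mem_coe, wd_eq_single, support_coeff_mul_single p 1 (by simp) v] at hw
  obtain ⟨x, hx, rfl⟩ := Finset.mem_map.mp hw
  exact mul_lt_mul_right_word (hp' x hx) (hp hx) v

lemma wd_mul_mem_supported_Iic {p : F K X} {u : FreeMonoid X}
    (hp : p ∈ supported K K (Set.Iic u)) (v : FreeMonoid X) :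
    wd K X v * p ∈ supported K K (Set.Iic (v * u)) := by
  refine mem_supported.mpr fun w hw => ?_
  rw [Finset.mem_coe, wd_eq_single, support_coeff_single_mul p 1 (by simp) v] at hw
  obtain ⟨x, hx, rfl⟩ := Finset.mem_map.mp hw
  exact mul_le_mul_left_word (hp hx) v

lemma wd_mul_mem_supported_Iio {p : F K X} {u : FreeMonoid X}
    (hp : p ∈ supported K K (Set.Iio u)) (v : FreeMonoid X) :
    wd K X v * p ∈ supported K K (Set.Iio (v * u)) := by
  refine mem_supported.mpr fun w hw => ?_
  rw [Finset.mem_coe, wd_eq_single, support_coeff_single_mul p 1 (by simp) v] at hw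
  obtain ⟨x, hx, rfl⟩ := Finset.mem_map.mp hw
  exact mul_lt_mul_left_word (hp hx) v

end Supported

section TensorOperators

variable (T : F K X →ₗ[K] F K X) {a b : ℕ}

lemma applyLeft_wd_mul {u v : FreeMonoid X} (hu : wlen X u = a) (hv : wlen X v = b) :
    applyLeft K X T a b (wd K X (u * v)) = T (wd K X u) * wd K X v := by
  have hu' : u.toList.length = a := hu
  rw [applyLeft, linearCombination_coeff_wd, if_pos (by rw [wlen_mul, hu, hv])]
  simp [hu']

lemma applyRight_wd_mul {u v : FreeMonoid X} (hu : wlen X u = a) (hv : wlen X v = b) :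
    applyRight K X T a b (wd K X (u * v)) = wd K X u * T (wd K X v) := by
  have hu' : u.toList.length = a := hu
  rw [applyRight, linearCombination_coeff_wd, if_pos (by rw [wlen_mul, hu, hv])]
  simp [hu']

lemma applyLeft_wd_of_wlen_ne {w : FreeMonoid X} (hw : wlen X w ≠ a + b) :
    applyLeft K X T a b (wd K X w) = wd K X w := by
  rw [applyLeft, linearCombination_coeff_wd, if_neg hw]

lemma applyRight_wd_of_wlen_ne {w : FreeMonoid X} (hw : wlen X w ≠ a + b) :
    applyRight K X T a b (wd K X w) = wd K X w := by
  rw [applyRight, linearCombination_coeff_wd, if_neg hw]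

lemma applyLeft_mul {p q : F K X} (hp : p ∈ degSub K X a) (hq : q ∈ degSub K X b) :
    applyLeft K X T a b (p * q) = T p * q := by
  rw [degSub_eq_span] at hp hq
  induction hp using Submodule.span_induction with
  | mem _ h =>
      obtain ⟨u, hu, rfl⟩ := h
      induction hq using Submodule.span_induction with
      | mem _ h =>
          obtain ⟨v, hv, rfl⟩ := h
          rw [wd_mul_wd, applyLeft_wd_mul T hu hv]
      | zero => simp
      | add _ _ _ _ h h' => simp [mul_add, h, h']
      | smul c _ _ h => simp [h]
  | zero => simp
  | add _ _ _ _ h h' => simp [add_mul, h, h']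
  | smul c _ _ h => simp [h]

lemma applyRight_mul {p q : F K X} (hp : p ∈ degSub K X a) (hq : q ∈ degSub K X b) :
    applyRight K X T a b (p * q) = p * T q := by
  rw [degSub_eq_span] at hp hq
  induction hp using Submodule.span_induction with
  | mem _ h =>
      obtain ⟨u, hu, rfl⟩ := h
      induction hq using Submodule.span_induction with
      | mem _ h =>
          obtain ⟨v, hv, rfl⟩ := h
          rw [wd_mul_wd, applyRight_wd_mul T hu hv]
      | zero => simp
      | add _ _ _ _ h h' => simp [mul_add, h, h']
      | smul c _ _ h => simp [h]
  | zero => simp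
  | add _ _ _ _ h h' => simp [add_mul, h, h']
  | smul c _ _ h => simp [h]

lemma applyLeft_eq_zero {U : Submodule K (F K X)} (hU : U ≤ degSub K X a)
    (hT : ∀ p ∈ U, T p = 0) {x : F K X} (hx : x ∈ U * degSub K X b) :
    applyLeft K X T a b x = 0 := by
  refine (Submodule.mul_le (P := LinearMap.ker (applyLeft K X T a b)).mpr ?_) hx
  intro p hp q hq
  simp [applyLeft_mul T (hU hp) hq, hT p hp]

lemma applyRight_eq_zero {U : Submodule K (F K X)} (hU : U ≤ degSub K X b)
    (hT : ∀ q ∈ U, T q = 0) {x : F K X} (hx : x ∈ degSub K X a * U) :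
    applyRight K X T a b x = 0 := by
  refine (Submodule.mul_le (P := LinearMap.ker (applyRight K X T a b)).mpr ?_) hx
  intro p hp q hq
  simp [applyRight_mul T hp (hU hq), hT q hq]

variable {T} in
lemma applyLeft_mem_triangular (hT : T ∈ triangular)
    (hTa : ∀ u, wlen X u = a → T (wd K X u) ∈ degSub K X a) :
    applyLeft K X T a b ∈ triangular := by
  intro w
  by_cases hw : wlen X w = a + b
  · obtain ⟨u, v, rfl, hu, hv⟩ := exists_eq_mul_of_wlen_eq_add hw
    rw [applyLeft_wd_mul T hu hv]
    exact mul_wd_mem_supported_Iic (hT u) (hu ▸ hTa u hu) v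
  · rw [applyLeft_wd_of_wlen_ne T hw]
    exact wd_mem_supported (Set.mem_Iic.mpr le_rfl)

variable {T} in
lemma applyRight_mem_triangular (hT : T ∈ triangular) : applyRight K X T a b ∈ triangular := by
  intro w
  by_cases hw : wlen X w = a + b
  · obtain ⟨u, v, rfl, hu, hv⟩ := exists_eq_mul_of_wlen_eq_add hw
    rw [applyRight_wd_mul T hu hv]
    exact wd_mul_mem_supported_Iic (hT v) u
  · rw [applyRight_wd_of_wlen_ne T hw]
    exact wd_mem_supported (Set.mem_Iic.mpr le_rfl)

lemma applyLeft_wd_of_forall {w : FreeMonoid X}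
    (h : ∀ u v, w = u * v → wlen X u = a → T (wd K X u) = wd K X u) :
    applyLeft K X T a b (wd K X w) = wd K X w := by
  by_cases hw : wlen X w = a + b
  · obtain ⟨u, v, rfl, hu, hv⟩ := exists_eq_mul_of_wlen_eq_add hw
    rw [applyLeft_wd_mul T hu hv, h u v rfl hu, wd_mul_wd]
  · exact applyLeft_wd_of_wlen_ne T hw

lemma applyRight_wd_of_forall {w : FreeMonoid X}
    (h : ∀ u v, w = u * v → wlen X u = a → T (wd K X v) = wd K X v) :
    applyRight K X T a b (wd K X w) = wd K X w := by
  by_cases hw : wlen X w = a + b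
  · obtain ⟨u, v, rfl, hu, hv⟩ := exists_eq_mul_of_wlen_eq_add hw
    rw [applyRight_wd_mul T hu hv, h u v rfl hu, wd_mul_wd]
  · exact applyRight_wd_of_wlen_ne T hw

end TensorOperators

section Monic

def IsMonicAt (c : F K X) (W : FreeMonoid X) : Prop :=
  c - wd K X W ∈ supported K K (Set.Iio W)

variable {c d : F K X} {W M : FreeMonoid X}

lemma IsMonicAt.coeff_eq_one (h : IsMonicAt c W) : c.coeff W = 1 := by
  simpa [coeff_wd_self, sub_eq_zero] using mem_supported'.mp h W (lt_irrefl W)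

lemma IsMonicAt.mem_supported_Iic (h : IsMonicAt c W) : c ∈ supported K K (Set.Iic W) := by
  rw [← sub_add_cancel c (wd K X W)]
  exact add_mem (supported_mono Set.Iio_subset_Iic_self h)
    (wd_mem_supported (Set.mem_Iic.mpr le_rfl))

lemma IsMonicAt.wlen_eq {n : ℕ} (h : IsMonicAt c W) (hc : c ∈ degSub K X n) : wlen X W = n :=
  hc W (Finsupp.mem_support_iff.mpr (by rw [h.coeff_eq_one]; exact one_ne_zero))

lemma IsMonicAt.add (h : IsMonicAt c W) (hd : d ∈ supported K K (Set.Iio W)) :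
    IsMonicAt (c + d) W := by
  rw [IsMonicAt, add_sub_right_comm]
  exact add_mem h hd

lemma IsMonicAt.sub_smul_mem_supported_Iio (hd : IsMonicAt d M) {p : F K X}
    (hp : p ∈ supported K K (Set.Iic M)) : p - p.coeff M • d ∈ supported K K (Set.Iio M) := by
  have : p - p.coeff M • d = (p - p.coeff M • wd K X M) - p.coeff M • (d - wd K X M) := by
    rw [smul_sub]; abel
  rw [this]
  exact sub_mem (sub_smul_wd_mem_supported_Iio hp) (Submodule.smul_mem _ _ hd)

lemma NHomogLC1.isMonicAt_lm (hhom : NHomogLC1 K X N R) {f : F K X} (hf : f ∈ R) :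
    IsMonicAt f (lm K X f) := by
  simpa [IsMonicAt, (hhom f hf).2] using sub_smul_wd_mem_supported_Iio (mem_supported_Iic_lm f)

lemma NHomogLC1.isMonicAt_mul_wd (hhom : NHomogLC1 K X N R) {f : F K X} (hf : f ∈ R)
    (t : FreeMonoid X) : IsMonicAt (f * wd K X t) (lm K X f * t) := by
  have hdeg : f - wd K X (lm K X f) ∈ degSub K X (wlen X (lm K X f)) := by
    rw [hhom.wlen_lm hf]
    exact sub_mem (hhom f hf).1 (wd_mem_supported (hhom.wlen_lm hf))
  rw [IsMonicAt, ← wd_mul_wd, ← sub_mul]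
  exact mul_wd_mem_supported_Iio (hhom.isMonicAt_lm hf) hdeg t

lemma NHomogLC1.isMonicAt_wd_mul (hhom : NHomogLC1 K X N R) {f : F K X} (hf : f ∈ R)
    (t : FreeMonoid X) : IsMonicAt (wd K X t * f) (t * lm K X f) := by
  rw [IsMonicAt, ← wd_mul_wd, ← mul_sub]
  exact wd_mul_mem_supported_Iio (hhom.isMonicAt_lm hf) t

end Monic

section SideConfluence

lemma span_mul_degSub_le (hhom : NHomogLC1 K X N R) :
    Submodule.span K R * degSub K X m ≤ degSub K X (N + m) :=
  (mul_le_mul' hhom.span_le_degSub le_rfl).trans (degSub_mul_le N m)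

lemma degSub_mul_span_le (hhom : NHomogLC1 K X N R) :
    degSub K X m * Submodule.span K R ≤ degSub K X (N + m) :=
  (mul_le_mul' le_rfl hhom.span_le_degSub).trans (add_comm m N ▸ degSub_mul_le m N)

lemma lm_reducible_of_mem_sup (hhom : NHomogLC1 K X N R) (hred : Reduced K X R)
    (hside : SideConfluent K X N R) (hm : 1 ≤ m) (hmN : m ≤ N - 1) {e : F K X}
    (he : e ∈ Submodule.span K R * degSub K X m ⊔ degSub K X m * Submodule.span K R)
    (hne : e ≠ 0) :
    (∃ f ∈ R, ∃ t, lm K X e = lm K X f * t) ∨ ∃ f ∈ R, ∃ t, lm K X e = t * lm K X f := by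
  -- `⟨T₂, T₁⟩^k` kills `R̄V^{⊗m}`, and also `V^{⊗m}R̄` since it equals `⟨T₁, T₂⟩^k` there;
  -- being triangular, it would fix the leading coefficient of `e` if `lm e` were irreducible
  -- at both ends.
  obtain ⟨k, hk, hcomm⟩ := hside m hm hmN
  set T₁ := applyLeft K X (Sop K X R) N m
  set T₂ := applyRight K X (Sop K X R) m N
  have hSop : ∀ p ∈ Submodule.span K R, Sop K X R p = 0 :=
    fun p hp => Sop_eq_zero_of_mem_span hhom hred hp
  obtain ⟨e₁, he₁, e₂, he₂, rfl⟩ := Submodule.mem_sup.mp he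
  have hzero : altProd T₂ T₁ k (e₁ + e₂) = 0 := by
    rw [map_add, altProd_apply_eq_zero _ _ hk (applyLeft_eq_zero _ hhom.span_le_degSub hSop he₁),
      hcomm e₂ (degSub_mul_span_le hhom he₂),
      altProd_apply_eq_zero _ _ hk (applyRight_eq_zero _ hhom.span_le_degSub hSop he₂), add_zero]
  by_contra hirr
  rw [not_or] at hirr
  set M := lm K X (e₁ + e₂)
  have hfix₁ : T₁ (wd K X M) = wd K X M := applyLeft_wd_of_forall _ fun u v huv _ =>
    Sop_wd_of_forall_ne fun f hf hfu => hirr.1 ⟨f, hf, v, hfu ▸ huv⟩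
  have hfix₂ : T₂ (wd K X M) = wd K X M := applyRight_wd_of_forall _ fun u v huv _ =>
    Sop_wd_of_forall_ne fun f hf hfv => hirr.2 ⟨f, hf, u, hfv ▸ huv⟩
  have hfix : altProd T₂ T₁ k ∈ MulAction.stabilizerSubmonoid _ (wd K X M) :=
    altProd_mem _ hfix₂ hfix₁ k
  have htri : altProd T₂ T₁ k ∈ triangular :=
    altProd_mem _ (applyRight_mem_triangular Sop_mem_triangular)
      (applyLeft_mem_triangular Sop_mem_triangular fun _ hu => Sop_wd_mem_degSub hhom hu) k
  have hcoeff := coeff_apply_of_mem_triangular htri hfix (mem_supported_Iic_lm _)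
  rw [hzero] at hcoeff
  exact Finsupp.mem_support_iff.mp (lm_mem_support hne) hcoeff.symm

lemma exists_isMonicAt_lm_of_mem_sup (hhom : NHomogLC1 K X N R) (hred : Reduced K X R)
    (hside : SideConfluent K X N R) (hm : 1 ≤ m) (hmN : m ≤ N - 1) {e : F K X}
    (he : e ∈ Submodule.span K R * degSub K X m ⊔ degSub K X m * Submodule.span K R)
    (hne : e ≠ 0) : ∃ d, (d ∈ Submodule.span K R * degSub K X m ∨
      d ∈ degSub K X m * Submodule.span K R) ∧ IsMonicAt d (lm K X e) := by
  have hlen : wlen X (lm K X e) = N + m :=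
    sup_le (span_mul_degSub_le hhom) (degSub_mul_span_le hhom) he _ (lm_mem_support hne)
  rcases lm_reducible_of_mem_sup hhom hred hside hm hmN he hne with ⟨f, hf, t, ht⟩ | ⟨f, hf, t, ht⟩
  · have htm : wlen X t = m := by rw [ht, wlen_mul, hhom.wlen_lm hf] at hlen; omega
    exact ⟨f * wd K X t, .inl (Submodule.mul_mem_mul (Submodule.subset_span hf)
      (wd_mem_supported htm)), ht ▸ hhom.isMonicAt_mul_wd hf t⟩
  · have htm : wlen X t = m := by rw [ht, wlen_mul, hhom.wlen_lm hf] at hlen; omega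
    exact ⟨wd K X t * f, .inr (Submodule.mul_mem_mul (wd_mem_supported htm)
      (Submodule.subset_span hf)), ht ▸ hhom.isMonicAt_wd_mul hf t⟩

lemma exists_mem_inf_isMonicAt (hhom : NHomogLC1 K X N R) (hred : Reduced K X R)
    (hside : SideConfluent K X N R) (hm : 1 ≤ m) (hmN : m ≤ N - 1) {W : FreeMonoid X}
    {c₁ c₂ : F K X} (hc₁ : c₁ ∈ Submodule.span K R * degSub K X m)
    (hc₂ : c₂ ∈ degSub K X m * Submodule.span K R) (h₁ : IsMonicAt c₁ W)
    (h₂ : IsMonicAt c₂ W) :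
    ∃ c ∈ Submodule.span K R * degSub K X m ⊓ degSub K X m * Submodule.span K R,
      IsMonicAt c W := by
  have hW : W ∈ {w | wlen X w = N + m} := h₁.wlen_eq (span_mul_degSub_le hhom hc₁)
  suffices key : ∀ M ∈ {w | wlen X w = N + m}, ∀ c₁ ∈ Submodule.span K R * degSub K X m,
      ∀ c₂ ∈ degSub K X m * Submodule.span K R, IsMonicAt c₁ W → IsMonicAt c₂ W →
      c₁ - c₂ ∈ supported K K (Set.Iio M) →
      ∃ c ∈ Submodule.span K R * degSub K X m ⊓ degSub K X m * Submodule.span K R,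
        IsMonicAt c W from
    key W hW c₁ hc₁ c₂ hc₂ h₁ h₂ (by simpa using sub_mem h₁ h₂)
  -- The lexicographic order is not well-founded on all words, but it is on the finitely many
  -- words of length `N + m`.
  intro M hM
  apply ((finite_setOf_wlen_eq (N + m)).wellFoundedOn (r := (· < ·))).induction hM
  intro M _ ih c₁ hc₁ c₂ hc₂ h₁ h₂ hlt
  by_cases he : c₁ - c₂ = 0
  · exact ⟨c₁, ⟨hc₁, sub_eq_zero.mp he ▸ hc₂⟩, h₁⟩
  have hsup := Submodule.sub_mem_sup hc₁ hc₂
  obtain ⟨d, hd, hdM⟩ := exists_isMonicAt_lm_of_mem_sup hhom hred hside hm hmN hsup he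
  set M' := lm K X (c₁ - c₂)
  have hM' : M' ∈ {w | wlen X w = N + m} :=
    sup_le (span_mul_degSub_le hhom) (degSub_mul_span_le hhom) hsup _ (lm_mem_support he)
  have hM'W : M' < W := lm_lt_of_mem_supported_Iio he (by simpa using sub_mem h₁ h₂)
  set r := (c₁ - c₂).coeff M'
  have hdW : r • d ∈ supported K K (Set.Iio W) :=
    Submodule.smul_mem _ _ (supported_mono (Set.Iic_subset_Iio.mpr hM'W) hdM.mem_supported_Iic)
  have hnext := hdM.sub_smul_mem_supported_Iio (mem_supported_Iic_lm (c₁ - c₂))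
  rcases hd with hd | hd
  · refine ih M' hM' (lm_lt_of_mem_supported_Iio he hlt) _
      (sub_mem hc₁ (Submodule.smul_mem _ r hd)) c₂ hc₂ ?_ h₂ ?_
    · simpa [sub_eq_add_neg] using h₁.add (neg_mem hdW)
    · rwa [sub_right_comm]
  · refine ih M' hM' (lm_lt_of_mem_supported_Iio he hlt) c₁ hc₁ _
      (add_mem hc₂ (Submodule.smul_mem _ r hd)) h₁ (h₂.add hdW) ?_
    rwa [sub_add_eq_sub_sub]

end SideConfluence

section ExtraConfluence

lemma exists_reduction_of_overlap (hhom : NHomogLC1 K X N R) (hred : Reduced K X R)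
    (hside : SideConfluent K X N R) (hec : ExtraCondition K X N R) (hm : 2 ≤ m)
    (hmN : m ≤ N - 1) {f g : F K X} (hf : f ∈ R) (hg : g ∈ R) {s t : FreeMonoid X}
    (hs : wlen X s = m) (ht : wlen X t = m) (hW : lm K X f * t = s * lm K X g) :
    ∃ h ∈ R, ∃ u v, wlen X u = m - 1 ∧ lm K X f * t = u * lm K X h * v := by
  obtain ⟨c, hc, hcW⟩ := exists_mem_inf_isMonicAt hhom hred hside (by omega) hmN
    (Submodule.mul_mem_mul (Submodule.subset_span hf) (wd_mem_supported ht))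
    (Submodule.mul_mem_mul (wd_mem_supported hs) (Submodule.subset_span hg))
    (hhom.isMonicAt_mul_wd hf t) (by rw [hW]; exact hhom.isMonicAt_wd_mul hg s)
  have hmid := hec m hm hmN (by rwa [inf_comm] at hc)
  set T := applyRight K X (applyLeft K X (Sop K X R) N 1) (m - 1) (N + 1)
  have hzero : T c = 0 := by
    rw [mul_assoc] at hmid
    exact applyRight_eq_zero _ (span_mul_degSub_le hhom) (fun q hq => applyLeft_eq_zero _
      hhom.span_le_degSub (fun p hp => Sop_eq_zero_of_mem_span hhom hred hp) hq) hmid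
  by_contra hirr
  have hfix : T (wd K X (lm K X f * t)) = wd K X (lm K X f * t) :=
    applyRight_wd_of_forall _ fun u v huv hu => applyLeft_wd_of_forall _ fun v₁ v₂ hv _ =>
      Sop_wd_of_forall_ne fun h hh hhv =>
        hirr ⟨h, hh, u, v₂, hu, by rw [huv, hv, ← hhv, mul_assoc]⟩
  have htri : T ∈ triangular := applyRight_mem_triangular
    (applyLeft_mem_triangular Sop_mem_triangular fun _ hu => Sop_wd_mem_degSub hhom hu)
  have hcoeff := coeff_apply_of_mem_triangular htri hfix hcW.mem_supported_Iic
  rw [hzero, hcW.coeff_eq_one] at hcoeff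
  exact zero_ne_one hcoeff

end ExtraConfluence

section Overlap

lemma mul_eq_mul_iff_word {a b c d : FreeMonoid X} :
    a * b = c * d ↔ (∃ e, c = a * e ∧ b = e * d) ∨ ∃ e, a = c * e ∧ d = e * b := by
  rw [← FreeMonoid.toList.injective.eq_iff, FreeMonoid.toList_mul, FreeMonoid.toList_mul,
    List.append_eq_append_iff]
  constructor
  · rintro (⟨e, h, h'⟩ | ⟨e, h, h'⟩)
    · exact .inl ⟨.ofList e, FreeMonoid.toList.injective (by simpa),
        FreeMonoid.toList.injective (by simpa)⟩
    · exact .inr ⟨.ofList e, FreeMonoid.toList.injective (by simpa),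
        FreeMonoid.toList.injective (by simpa)⟩
  · rintro (⟨e, rfl, rfl⟩ | ⟨e, rfl, rfl⟩)
    · exact .inl ⟨e.toList, by simp, by simp⟩
    · exact .inr ⟨e.toList, by simp, by simp⟩

lemma overlap_cases {w₁ w₂ u A v : FreeMonoid X} {x : X} (hw₂ : wlen X w₂ + 1 = wlen X A)
    (h : w₁ * FreeMonoid.of x * w₂ = u * A * v) :
    (∃ t, w₁ * FreeMonoid.of x = u * A * t) ∨ A = FreeMonoid.of x * w₂ ∨
      ∃ s p, A = s * FreeMonoid.of x * p ∧ w₂ = p * v ∧ wlen X v = wlen X s ∧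
        1 ≤ wlen X s ∧ wlen X s + 2 ≤ wlen X A := by
  rw [mul_assoc, mul_assoc] at h
  rcases mul_eq_mul_iff_word.mp h with ⟨e, -, he⟩ | ⟨s, rfl, hAv⟩
  · have hlen := congrArg (wlen X) he
    simp only [wlen_mul, wlen_of] at hlen
    obtain rfl : e = 1 := wlen_eq_zero.mp (by omega)
    obtain rfl : v = 1 := wlen_eq_zero.mp (by omega)
    simp_all
  rcases mul_eq_mul_iff_word.mp hAv with ⟨e, rfl, -⟩ | ⟨c, rfl, hxw⟩
  · exact .inl ⟨e * FreeMonoid.of x, by simp only [mul_assoc]⟩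
  rcases mul_eq_mul_iff_word.mp hxw with ⟨p, rfl, rfl⟩ | ⟨e, hx, -⟩
  · simp only [wlen_mul, wlen_of] at hw₂ ⊢
    by_cases hs : wlen X s = 0
    · obtain rfl := wlen_eq_zero.mp hs
      obtain rfl : v = 1 := wlen_eq_zero.mp (by omega)
      simp
    by_cases hp : wlen X p = 0
    · obtain rfl := wlen_eq_zero.mp hp
      exact .inl ⟨1, by simp only [mul_one, mul_assoc]⟩
    exact .inr (.inr ⟨s, p, by simp only [mul_assoc], rfl, by omega, by omega, by omega⟩)
  · exact .inl ⟨e, by rw [hx]; simp only [mul_assoc]⟩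

end Overlap

end CC

open CC in
/-- Suppose the reduced `N`-homogeneous presentation `⟨X|R⟩` is
extra-confluent.  Let `w₁` be a word, `w₂` a word of length `N−1`, and `x₁, x₂ ∈ X` such that
`w₁x₁` and `x₁w₂` are normal forms while `w₂x₂` is not a normal form.  Then `w₁x₁w₂` is a
normal form for `⟨X|R⟩`. -/
theorem stmt7 (K : Type*) [Field K] (X : Type*) [Fintype X] [LinearOrder X]
    (N : ℕ) (hN : 2 ≤ N) (R : Set (F K X))
    (hhom : NHomogLC1 K X N R) (hred : Reduced K X R)
    (hside : SideConfluent K X N R) (hec : ExtraCondition K X N R)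
    (w1 w2 : FreeMonoid X) (x1 x2 : X) (hlen : wlen X w2 = N - 1)
    (h1 : IsNormalForm K X R (wd K X (w1 * FreeMonoid.of x1)))
    (h2 : IsNormalForm K X R (wd K X (FreeMonoid.of x1 * w2)))
    (h3 : ¬ IsNormalForm K X R (wd K X (w2 * FreeMonoid.of x2))) :
    IsNormalForm K X R (wd K X (w1 * FreeMonoid.of x1 * w2)) := by
  obtain ⟨g, hg, hlmg⟩ := hhom.exists_lm_eq_of_not_isNormalForm
    (by rw [wlen_mul, wlen_of, hlen]; omega) h3
  rw [isNormalForm_wd_iff hhom.zero_notMem] at h1 h2 ⊢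
  intro f hf u v huv
  rcases overlap_cases (by rw [hlen, hhom.wlen_lm hf]; omega) huv with
    ⟨t, ht⟩ | hA | ⟨s, p, hA, hw2, hv, hs1, hs2⟩
  · exact h1 f hf u t ht
  · exact h2 f hf 1 1 (by simp [hA])
  rw [hhom.wlen_lm hf] at hs2
  obtain ⟨h, hh, u', v', hu', heq⟩ := exists_reduction_of_overlap hhom hred hside hec
    (m := wlen X s + 1) (by omega) (by omega) hf hg (s := s * FreeMonoid.of x1)
    (t := v * FreeMonoid.of x2) (by rw [wlen_mul, wlen_of]) (by rw [wlen_mul, wlen_of, hv])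
    (by rw [hA, hlmg, hw2]; simp only [mul_assoc])
  have hW : lm K X f * (v * FreeMonoid.of x2) = s * (FreeMonoid.of x1 * w2 * FreeMonoid.of x2) := by
    rw [hA, hw2]; simp only [mul_assoc]
  rw [hW, mul_assoc u'] at heq
  obtain ⟨-, heq'⟩ := eq_and_eq_of_mul_eq_mul heq (by omega)
  obtain ⟨hlmh, -⟩ := eq_and_eq_of_mul_eq_mul heq'
    (by rw [hhom.wlen_lm hh, wlen_mul, wlen_of, hlen]; omega)
  exact h2 h hh 1 1 (by simp [hlmh])
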